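/- arXiv:0908.4241 — 2 statements merged into one kernel-verified Lean document; each statement's English description precedes it below -/
import Mathlib

section
/- Let r ≥ 0, let R = MvPowerSeries (Fin r) ℂ be the ring of formal power series in r variables over ℂ, and let m ⊂ R be the ideal of power series with zero constant coefficient. Let b, c ∈ m and let U be a unit of the power series ring R[[t]]. Then U·(t² + b·t + c) is the square of an element of R[[t]] if and only if b² − 4c = 0. -/
/-!
Write `Q = t² + b t + c`, so that `Q'² - 4Q = δ := b² - 4c` lies in `R = ℂ[[s]]`.

If `U Q = V²` with `U` a unit, differentiating gives `V ∣ Q'`, hence `Q'² = F Q` for some `F`.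
Modulo the maximal ideal of `R` this reads `4t² = F̄ t²`, so `F` is a unit and
`δ = Q'² (1 - 4F⁻¹)` is divisible by `Q' = 2(t + β)`, `β = b/2`. Comparing coefficients in
`δ = (t + β) K` shows `β^n ∣ δ` for every `n`; as `β` has zero constant term, `δ = 0`.

Conversely, if `δ = 0` then `Q = (t + β)²`, and every unit of `R[[t]]` is a square: its constant
term is a square since `ℂ` is algebraically closed, and `1 + a` with `a` of zero constant term is
a square, namely the binomial series of `(1 + X)^{1/2}` evaluated at `a`.
-/

theorem Derivation.dvd_apply_of_isUnit_mul_eq_sq {R A : Type*} [CommRing R] [CommRing A]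
    [Algebra R A] (D : Derivation R A A) {u q v : A} (hu : IsUnit u) (h : u * q = v ^ 2) :
    v ∣ D q := by
  obtain ⟨w, hw⟩ := hu.exists_right_inv
  have hD : u * D q + q * D u = 2 * v * D v := by
    have := congrArg D h
    rw [Derivation.leibniz, Derivation.leibniz_pow] at this
    simp only [smul_eq_mul] at this
    linear_combination this
  refine ⟨w * (2 * D v - w * v * D u), ?_⟩
  linear_combination w * hD + (w * q * D u - D q) * hw - w ^ 2 * D u * h

namespace MvPowerSeries

variable {σ R : Type*} [CommRing R]

theorem eq_zero_of_forall_pow_dvd {a f : MvPowerSeries σ R} (ha : constantCoeff a = 0)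
    (h : ∀ n, a ^ n ∣ f) : f = 0 := by
  refine order_eq_top_iff.mp (ENat.eq_top_iff_forall_ge.mpr fun n => ?_)
  obtain ⟨g, rfl⟩ := h n
  calc (n : ℕ∞) ≤ (a ^ n).order := le_order_pow_of_constantCoeff_eq_zero n ha
    _ ≤ (a ^ n).order + g.order := le_self_add
    _ ≤ (a ^ n * g).order := le_order_mul

theorem isUnit_two {k : Type*} [Field k] [NeZero (2 : k)] :
    IsUnit (2 : MvPowerSeries σ k) := by
  have := (NeZero.ne (2 : k)).isUnit.map (algebraMap k (MvPowerSeries σ k))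
  rwa [map_ofNat] at this

variable [Algebra ℚ R]

theorem isSquare_one_add {a : MvPowerSeries σ R} (ha : constantCoeff a = 0) :
    IsSquare (1 + a) := by
  have hsq : PowerSeries.binomialSeries ℚ (2⁻¹ : ℚ) *
      PowerSeries.binomialSeries ℚ (2⁻¹ : ℚ) = 1 + PowerSeries.X := by
    rw [← PowerSeries.binomialSeries_add, show (2⁻¹ + 2⁻¹ : ℚ) = ((1 : ℕ) : ℚ) by norm_num,
      PowerSeries.binomialSeries_nat, pow_one]
  let φ := PowerSeries.substAlgHom (R := ℚ) (PowerSeries.HasSubst.of_constantCoeff_zero ha)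
  refine ⟨φ (PowerSeries.binomialSeries ℚ (2⁻¹ : ℚ)), ?_⟩
  rw [← map_mul, hsq, map_add, map_one, PowerSeries.substAlgHom_X]

theorem isSquare_of_isSquare_constantCoeff {f : MvPowerSeries σ R}
    (hsq : IsSquare (constantCoeff f)) (hunit : IsUnit (constantCoeff f)) : IsSquare f := by
  obtain ⟨r, hr⟩ := hsq
  set u := constantCoeff f
  obtain ⟨s, hs⟩ := isSquare_one_add (a := C hunit.unit⁻¹.val * f - 1) (by simp [u])
  refine ⟨C r * s, ?_⟩
  calc f = C u * (1 + (C hunit.unit⁻¹.val * f - 1)) := by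
          rw [add_sub_cancel, ← mul_assoc, ← map_mul, hunit.mul_val_inv, map_one, one_mul]
    _ = C r * s * (C r * s) := by rw [hs, hr, map_mul]; ring

end MvPowerSeries

namespace PowerSeries

theorem pow_dvd_of_X_add_C_dvd_C {R : Type*} [CommRing R] {a δ : R} (h : X + C a ∣ C δ)
    (n : ℕ) : a ^ n ∣ δ := by
  obtain ⟨K, hK⟩ := h
  have hcoeff : ∀ m, coeff m K + a * coeff (m + 1) K = 0 := fun m => by
    simpa [add_mul, coeff_C, coeff_succ_X_mul] using (congrArg (coeff (m + 1)) hK).symm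
  have hδ : ∀ m, δ = (-1) ^ m * a ^ (m + 1) * coeff m K := by
    intro m
    induction m with
    | zero => simpa using congrArg constantCoeff hK
    | succ m ih => rw [ih]; linear_combination (-1) ^ m * a ^ (m + 1) * hcoeff m
  exact (pow_dvd_pow a (Nat.le_add_right n 1)).trans ⟨(-1) ^ n * coeff n K, by rw [hδ n]; ring⟩

variable {σ k : Type*} [Field k]

theorem isSquare_of_isUnit [CharZero k] [IsAlgClosed k] {U : PowerSeries (MvPowerSeries σ k)}
    (hU : IsUnit U) : IsSquare U := by
  have hU₀ : IsUnit (constantCoeff U) := hU.map constantCoeff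
  have hsq₀ := MvPowerSeries.isSquare_of_isSquare_constantCoeff
    (IsAlgClosed.exists_eq_mul_self _) (hU₀.map MvPowerSeries.constantCoeff)
  exact MvPowerSeries.isSquare_of_isSquare_constantCoeff (σ := Unit) hsq₀ hU₀

variable [NeZero (2 : k)]

theorem isUnit_of_sq_eq_mul_quadratic {b c : MvPowerSeries σ k}
    (hb : MvPowerSeries.constantCoeff b = 0) (hc : MvPowerSeries.constantCoeff c = 0)
    {F : PowerSeries (MvPowerSeries σ k)} (h : (2 * X + C b) ^ 2 = F * (X ^ 2 + C b * X + C c)) :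
    IsUnit F := by
  have hred := congrArg (map MvPowerSeries.constantCoeff) h
  simp only [map_pow, map_mul, map_add, map_ofNat, map_X, map_C, hb, hc, map_zero,
    add_zero] at hred
  have h4 : map MvPowerSeries.constantCoeff F = 4 := by
    refine mul_right_cancel₀ (pow_ne_zero 2 X_ne_zero) ?_
    linear_combination -hred
  have h4' := congrArg constantCoeff h4
  rw [← coeff_zero_eq_constantCoeff_apply, coeff_map, coeff_zero_eq_constantCoeff_apply,
    map_ofNat] at h4'
  rw [isUnit_iff_constantCoeff, MvPowerSeries.isUnit_iff_constantCoeff, h4', isUnit_iff_ne_zero,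
    show (4 : k) = 2 * 2 by norm_num]
  exact mul_ne_zero two_ne_zero two_ne_zero

theorem sq_sub_four_mul_eq_zero_of_isUnit_mul_eq_sq {b c : MvPowerSeries σ k}
    (hb : MvPowerSeries.constantCoeff b = 0) (hc : MvPowerSeries.constantCoeff c = 0)
    {U V : PowerSeries (MvPowerSeries σ k)} (hU : IsUnit U)
    (h : U * (X ^ 2 + C b * X + C c) = V ^ 2) : b ^ 2 - 4 * c = 0 := by
  obtain ⟨G, hG⟩ := (derivative _).dvd_apply_of_isUnit_mul_eq_sq hU h
  have hQ' : derivative _ (X ^ 2 + C b * X + C c) = 2 * X + C b := by simp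
  rw [hQ'] at hG
  have hPQ : (2 * X + C b) ^ 2 = U * G ^ 2 * (X ^ 2 + C b * X + C c) := by
    rw [hG]; linear_combination -G ^ 2 * h
  obtain ⟨F', hF'⟩ := (isUnit_of_sq_eq_mul_quadratic hb hc hPQ).exists_right_inv
  obtain ⟨β, rfl⟩ := MvPowerSeries.isUnit_two.dvd (a := b)
  have hβ : MvPowerSeries.constantCoeff β = 0 := by
    rw [map_mul, map_ofNat] at hb
    exact (mul_eq_zero.mp hb).resolve_left two_ne_zero
  have hdvd : X + C β ∣ C ((2 * β) ^ 2 - 4 * c) := by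
    refine ⟨C 2 * (2 * X + C (2 * β)) * (1 - 4 * F'), ?_⟩
    simp only [map_sub, map_mul, map_pow, map_ofNat] at hPQ ⊢
    linear_combination 4 * F' * hPQ + 4 * (X ^ 2 + 2 * C β * X + C c) * hF'
  exact MvPowerSeries.eq_zero_of_forall_pow_dvd hβ (pow_dvd_of_X_add_C_dvd_C hdvd)

theorem isSquare_mul_of_sq_sub_four_mul_eq_zero {b c : MvPowerSeries σ k}
    (h : b ^ 2 - 4 * c = 0) {U : PowerSeries (MvPowerSeries σ k)} (hU : IsSquare U) :
    ∃ V, U * (X ^ 2 + C b * X + C c) = V ^ 2 := by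
  obtain ⟨W, rfl⟩ := hU
  obtain ⟨β, rfl⟩ := MvPowerSeries.isUnit_two.dvd (a := b)
  have hc : c = β ^ 2 :=
    (MvPowerSeries.isUnit_two.mul MvPowerSeries.isUnit_two).mul_left_cancel
      (by linear_combination -h)
  refine ⟨W * (X + C β), ?_⟩
  rw [hc, map_pow, map_mul, map_ofNat]
  ring

end PowerSeries

/-- Let `R = ℂ[[s₁,…,s_r]]`, let `b c ∈ R` have zero constant coefficient and let
`U` be a unit of `R[[t]]`.  Then `U·(t² + b·t + c)` is a square in `R[[t]]` iff
`b² - 4c = 0`. -/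
theorem stmt_5 (r : ℕ) (b c : MvPowerSeries (Fin r) ℂ)
    (hb : MvPowerSeries.constantCoeff b = 0)
    (hc : MvPowerSeries.constantCoeff c = 0)
    (U : (PowerSeries (MvPowerSeries (Fin r) ℂ))ˣ) :
    (∃ V : PowerSeries (MvPowerSeries (Fin r) ℂ),
        (U : PowerSeries (MvPowerSeries (Fin r) ℂ)) *
          (PowerSeries.X ^ 2 + PowerSeries.C b * PowerSeries.X + PowerSeries.C c)
          = V ^ 2) ↔
      b ^ 2 - 4 * c = 0 := by
  constructor
  · rintro ⟨V, hV⟩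
    exact PowerSeries.sq_sub_four_mul_eq_zero_of_isUnit_mul_eq_sq hb hc U.isUnit hV
  · intro h
    exact PowerSeries.isSquare_mul_of_sq_sub_four_mul_eq_zero h
      (PowerSeries.isSquare_of_isUnit U.isUnit)
end

section
/- Let n ≥ 1 and let e ≥ 2n be an integer. There exists a nonzero homogeneous polynomial G of degree e in the variables x₀,…,x_{n+1} over ℂ such that no 2-dimensional ℂ-linear subspace of ℂ^{n+2} is contained in the zero set of G. -/
/-!
Take the forms `G_c = ∑ c_{i,j,r} x_i^(e-r) x_j^r`. Every 2-plane has a basis `u, v` with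
`u i = v j = 1` and `u j = v i = 0` for some `i ≠ j`, so it is determined by the remaining
`2(m-2)` coordinates of `u` and `v`. If `G_c` vanishes on it, its values at `u + q v`,
`q = 0, …, e`, form a Vandermonde system which determines the `e + 1` coefficients
`c_{i,j,·}` from the plane and the other coefficients. Hence the bad coefficient vectors lie
in finitely many images of smooth maps from spaces of smaller dimension as soon as
`2(m-2) < e + 1`; these images are Lebesgue-null, and any `c` outside them works.
-/

open MeasureTheory Module MvPolynomial

theorem MeasureTheory.Measure.addHaar_range_eq_zero_of_finrank_lt
    {E F : Type*} [NormedAddCommGroup E] [NormedSpace ℝ E] [MeasurableSpace E] [BorelSpace E]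
    [FiniteDimensional ℝ E] [NormedAddCommGroup F] [NormedSpace ℝ F] [FiniteDimensional ℝ F]
    (μ : Measure E) [μ.IsAddHaarMeasure] {f : F → E} (hf : Differentiable ℝ f)
    (hdim : finrank ℝ F < finrank ℝ E) : μ (Set.range f) = 0 := by
  -- `range f` is the image under `f ∘ P` of the proper subspace `range ι`, where `P ∘ ι = id`.
  obtain ⟨ι, hι⟩ := finrank_le_iff_exists_linearMap.mp hdim.le
  obtain ⟨P, hP⟩ := ι.exists_leftInverse_of_injective (LinearMap.ker_eq_bot.mpr hι)
  have hι_ne_top : LinearMap.range ι ≠ ⊤ := fun htop => by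
    have := LinearMap.finrank_range_of_inj hι
    rw [htop, finrank_top] at this
    omega
  have hrange : Set.range f = (f ∘ P) '' LinearMap.range ι := by
    rw [Set.image_comp, LinearMap.coe_range, ← Set.range_comp, ← LinearMap.coe_comp, hP,
      LinearMap.id_coe, Set.range_id, Set.image_univ]
  rw [hrange]
  exact addHaar_image_eq_zero_of_differentiableOn_of_addHaar_eq_zero μ
    (hf.comp (LinearMap.toContinuousLinearMap P).differentiable).differentiableOn
    (addHaar_submodule μ _ hι_ne_top)

theorem Submodule.exists_normalized_pair_of_finrank_eq_two {K ι : Type*} [Field K]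
    (W : Submodule K (ι → K)) (hW : finrank K W = 2) :
    ∃ i j, i ≠ j ∧ ∃ u ∈ W, ∃ v ∈ W, u i = 1 ∧ u j = 0 ∧ v i = 0 ∧ v j = 1 := by
  obtain ⟨w, hwW, hw0⟩ := W.exists_mem_ne_zero_of_ne_bot (by
    rintro rfl
    simp at hW)
  obtain ⟨i, hwi⟩ : ∃ i, w i ≠ 0 := Function.ne_iff.mp hw0
  have hker : LinearMap.ker ((LinearMap.proj i).comp W.subtype) ≠ ⊥ := fun hbot => by
    have := LinearMap.finrank_le_finrank_of_injective (LinearMap.ker_eq_bot.mp hbot)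
    rw [hW, finrank_self] at this
    omega
  obtain ⟨⟨v₀, hv₀W⟩, hv₀i, hv₀⟩ := Submodule.exists_mem_ne_zero_of_ne_bot hker
  replace hv₀i : v₀ i = 0 := hv₀i
  obtain ⟨j, hv₀j⟩ : ∃ j, v₀ j ≠ 0 := Function.ne_iff.mp fun h => hv₀ (Subtype.ext h)
  have hij : i ≠ j := by rintro rfl; exact hv₀j hv₀i
  set v := (v₀ j)⁻¹ • v₀
  set u := (w i)⁻¹ • w - ((w i)⁻¹ * w j) • v
  have hvi : v i = 0 := by simp [v, hv₀i]
  have hvj : v j = 1 := by simp [v, hv₀j]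
  refine ⟨i, j, hij, u, W.sub_mem (W.smul_mem _ hwW) (W.smul_mem _ (W.smul_mem _ hv₀W)),
    v, W.smul_mem _ hv₀W, ?_, ?_, hvi, hvj⟩
  · simp [u, hvi, hwi]
  · simp [u, hvj]

namespace LineFree

variable {m e : ℕ}

abbrev MonoIdx (m e : ℕ) := Fin m × Fin m × Fin (e + 1)

def monoVal (x : MonoIdx m e) (p : Fin m → ℂ) : ℂ :=
  p x.1 ^ (e - x.2.2 : ℕ) * p x.2.1 ^ (x.2.2 : ℕ)

noncomputable def pairForm (c : MonoIdx m e → ℂ) : MvPolynomial (Fin m) ℂ :=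
  ∑ x, C (c x) * (X x.1 ^ (e - x.2.2 : ℕ) * X x.2.1 ^ (x.2.2 : ℕ))

theorem isHomogeneous_pairForm (c : MonoIdx m e → ℂ) : (pairForm c).IsHomogeneous e := by
  refine IsHomogeneous.sum _ _ _ fun x _ => IsHomogeneous.C_mul ?_ _
  simpa [Nat.sub_add_cancel (Nat.lt_succ_iff.mp x.2.2.isLt)] using
    (isHomogeneous_X_pow x.1 (e - x.2.2 : ℕ)).mul (isHomogeneous_X_pow (R := ℂ) x.2.1 x.2.2)

theorem eval_pairForm (c : MonoIdx m e → ℂ) (p : Fin m → ℂ) :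
    eval p (pairForm c) = ∑ x, c x * monoVal x p := by
  simp [pairForm, monoVal]

open Matrix

abbrev offPair (i j : Fin m) : Finset (Fin m) := {i, j}ᶜ

variable {i j : Fin m}

def planePoint (a : offPair i j → ℂ × ℂ) (q : ℂ) : Fin m → ℂ := fun k =>
  if h : k ∈ offPair i j then (a ⟨k, h⟩).1 + q * (a ⟨k, h⟩).2 else if k = i then 1 else q

theorem planePoint_left (a : offPair i j → ℂ × ℂ) (q : ℂ) : planePoint a q i = 1 := by
  simp [planePoint]

theorem planePoint_right (hij : i ≠ j) (a : offPair i j → ℂ × ℂ) (q : ℂ) :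
    planePoint a q j = q := by
  simp [planePoint, hij.symm]

theorem planePoint_eq_add_smul (hij : i ≠ j) {u v : Fin m → ℂ} (hui : u i = 1)
    (huj : u j = 0) (hvi : v i = 0) (hvj : v j = 1) (q : ℂ) :
    planePoint (fun k : offPair i j => (u k, v k)) q = u + q • v := by
  ext k
  by_cases hk : k ∈ offPair i j
  · simp only [planePoint, dif_pos hk, Pi.add_apply, Pi.smul_apply, smul_eq_mul]
  · obtain rfl | rfl : k = i ∨ k = j := by
      rwa [Finset.mem_compl, not_not, Finset.mem_insert, Finset.mem_singleton] at hk
    · simp [planePoint_left, hui, hvi]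
    · simp [planePoint_right hij, huj, hvj]

@[fun_prop]
theorem differentiable_planePoint_apply (q : ℂ) (k : Fin m) :
    Differentiable ℝ fun a : offPair i j → ℂ × ℂ => planePoint a q k := by
  unfold planePoint
  split_ifs <;> fun_prop

def block (e : ℕ) (i j : Fin m) : Finset (MonoIdx m e) := {i} ×ˢ ({j} ×ˢ Finset.univ)

theorem mem_block {x : MonoIdx m e} : x ∈ block e i j ↔ x.1 = i ∧ x.2.1 = j := by
  simp only [block, Finset.mem_product, Finset.mem_singleton, Finset.mem_univ, and_true]

def offBlockSum (a : offPair i j → ℂ × ℂ) (c' : ↥(block e i j)ᶜ → ℂ) (q : ℂ) : ℂ :=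
  ∑ x : ↥(block e i j)ᶜ, c' x * monoVal x.1 (planePoint a q)

theorem eval_pairForm_planePoint (hij : i ≠ j) (c : MonoIdx m e → ℂ)
    (a : offPair i j → ℂ × ℂ) (q : ℂ) :
    eval (planePoint a q) (pairForm c) =
      ∑ r : Fin (e + 1), q ^ (r : ℕ) * c (i, j, r) +
        offBlockSum a ((block e i j)ᶜ.restrict c) q := by
  rw [eval_pairForm, ← Finset.sum_add_sum_compl (block e i j), offBlockSum]
  congr 1
  · simp [block, monoVal, planePoint_left, planePoint_right hij, mul_comm]
  · rw [← Finset.sum_coe_sort]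
    rfl

def sampleVandermonde (e : ℕ) : Matrix (Fin (e + 1)) (Fin (e + 1)) ℂ :=
  Matrix.vandermonde fun q => ((q : ℕ) : ℂ)

theorem isUnit_det_sampleVandermonde (e : ℕ) : IsUnit (sampleVandermonde e).det := by
  rw [isUnit_iff_ne_zero, sampleVandermonde, Matrix.det_vandermonde_ne_zero_iff]
  exact fun q r h => Fin.ext (Nat.cast_injective h)

noncomputable def solveBlock (a : offPair i j → ℂ × ℂ) (c' : ↥(block e i j)ᶜ → ℂ) :
    MonoIdx m e → ℂ := fun x =>
  if h : x ∈ block e i j then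
    ((sampleVandermonde e)⁻¹ *ᵥ fun q => -offBlockSum a c' (q : ℕ)) x.2.2
  else c' ⟨x, Finset.mem_compl.mpr h⟩

theorem solveBlock_eq_of_eval_eq_zero (hij : i ≠ j) (c : MonoIdx m e → ℂ)
    (a : offPair i j → ℂ × ℂ)
    (h : ∀ q : Fin (e + 1), eval (planePoint a (q : ℕ)) (pairForm c) = 0) :
    solveBlock a ((block e i j)ᶜ.restrict c) = c := by
  have hV : sampleVandermonde e *ᵥ (fun r => c (i, j, r)) =
      fun q : Fin (e + 1) => -offBlockSum a ((block e i j)ᶜ.restrict c) (q : ℕ) := by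
    ext q
    have hq := h q
    rw [eval_pairForm_planePoint hij] at hq
    simp only [Matrix.mulVec, dotProduct, sampleVandermonde, Matrix.vandermonde_apply]
    linear_combination hq
  ext x
  by_cases hx : x ∈ block e i j
  · obtain ⟨x₁, x₂, r⟩ := x
    obtain ⟨rfl, rfl⟩ := mem_block.1 hx
    rw [solveBlock, dif_pos hx, ← hV, Matrix.mulVec_mulVec,
      Matrix.nonsing_inv_mul _ (isUnit_det_sampleVandermonde e), Matrix.one_mulVec]
  · rw [solveBlock, dif_neg hx]
    rfl

theorem differentiable_solveBlock :
    Differentiable ℝ fun p : (offPair i j → ℂ × ℂ) × (↥(block e i j)ᶜ → ℂ) =>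
      solveBlock p.1 p.2 := by
  rw [differentiable_pi]
  intro x
  unfold solveBlock offBlockSum monoVal
  split_ifs
  · simp only [Matrix.mulVec, dotProduct]
    fun_prop
  · fun_prop

theorem addHaar_range_solveBlock (μ : Measure (MonoIdx m e → ℂ)) [μ.IsAddHaarMeasure]
    (hij : i ≠ j) (hdim : 2 * (m - 2) < e + 1) :
    μ (Set.range fun p : (offPair i j → ℂ × ℂ) × (↥(block e i j)ᶜ → ℂ) =>
      solveBlock p.1 p.2) = 0 := by
  refine μ.addHaar_range_eq_zero_of_finrank_lt differentiable_solveBlock ?_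
  have hoff : (offPair i j).card = m - 2 := by
    rw [Finset.card_compl, Finset.card_pair hij, Fintype.card_fin]
  have hblock : (block e i j).card = e + 1 := by simp [block]
  simp only [finrank_prod, finrank_pi_fintype, Finset.sum_const, Finset.card_univ,
    Fintype.card_coe, smul_eq_mul, hoff, Finset.card_compl, hblock, Fintype.card_prod,
    Fintype.card_fin, Complex.finrank_real_complex]
  have : e + 1 ≤ m * (m * (e + 1)) :=
    Nat.le_mul_of_pos_left _ (Nat.mul_pos i.pos i.pos) |>.trans_eq (Nat.mul_assoc ..)
  omega

def VanishesAtLinePoints (c : MonoIdx m e → ℂ) : Prop :=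
  ∃ i j : Fin m, i ≠ j ∧ ∃ a : offPair i j → ℂ × ℂ,
    ∀ q : Fin (e + 1), eval (planePoint a (q : ℕ)) (pairForm c) = 0

theorem exists_not_vanishesAtLinePoints (hdim : 2 * (m - 2) < e + 1) :
    ∃ c : MonoIdx m e → ℂ, ¬ VanishesAtLinePoints c := by
  have hnull : volume {c : MonoIdx m e → ℂ | VanishesAtLinePoints c} = 0 := by
    refine measure_mono_null ?_ (measure_iUnion_null fun i => measure_iUnion_null fun j =>
      measure_iUnion_null fun (hij : i ≠ j) => addHaar_range_solveBlock volume hij hdim)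
    rintro c ⟨i, j, hij, a, h⟩
    simp only [Set.mem_iUnion]
    exact ⟨i, j, hij, (a, _), solveBlock_eq_of_eval_eq_zero hij c a h⟩
  exact (measure_eq_zero_iff_ae_notMem.1 hnull).exists

end LineFree

theorem stmt_11_general (n e : ℕ) (he : 2 * n ≤ e) :
    ∃ G : MvPolynomial (Fin (n + 2)) ℂ, G ≠ 0 ∧ G.IsHomogeneous e ∧
      ∀ W : Subspace ℂ (Fin (n + 2) → ℂ), Module.finrank ℂ W = 2 →
        ∃ x ∈ W, MvPolynomial.eval x G ≠ 0 := by
  obtain ⟨c, hc⟩ := LineFree.exists_not_vanishesAtLinePoints (m := n + 2) (e := e) (by omega)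
  refine ⟨LineFree.pairForm c, ?_, LineFree.isHomogeneous_pairForm c, fun W hW => ?_⟩
  · rintro hzero
    exact hc ⟨0, 1, by simp, fun _ => 0, fun q => by simp [hzero]⟩
  · by_contra! hvanish
    obtain ⟨i, j, hij, u, hu, v, hv, hui, huj, hvi, hvj⟩ :=
      W.exists_normalized_pair_of_finrank_eq_two hW
    refine hc ⟨i, j, hij, fun k => (u k, v k), fun q => ?_⟩
    rw [LineFree.planePoint_eq_add_smul hij hui huj hvi hvj]
    exact hvanish _ (W.add_mem hu (W.smul_mem _ hv))

/-- For every `e ≥ 2n` there is a smooth-degree witness: a nonzero homogeneous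
polynomial `G` of degree `e` in `n + 2` variables over `ℂ` vanishing on no
2-dimensional linear subspace of `ℂ^{n+2}` (i.e. the hypersurface `(G = 0) ⊂ ℙ^{n+1}`
contains no line). -/
theorem stmt_11 (n e : ℕ) (hn : 1 ≤ n) (he : 2 * n ≤ e) :
    ∃ G : MvPolynomial (Fin (n + 2)) ℂ, G ≠ 0 ∧ G.IsHomogeneous e ∧
      ∀ W : Subspace ℂ (Fin (n + 2) → ℂ), Module.finrank ℂ W = 2 →
        ∃ x ∈ W, MvPolynomial.eval x G ≠ 0 :=
  stmt_11_general n e he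
end
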